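/- For every real α with 0 < α ≤ 1, the infimum of a+b+2(c+d) over all embedded-rectangle configurations (a,b,c,d) for α equals 2√α + 4√(1+α), and it is attained at (a,b,c,d) = (√α, √α, √(1+α), √(1+α)). -/
import Mathlib


/-- An embedded-rectangle configuration for `α`: a rectangle `a × b` placed in a corner
of a larger rectangle `c × d` of area `1 + α`, the inner rectangle having area `α` or
`1`. -/
def IsEmbeddedConfig (α a b c d : ℝ) : Prop :=
  0 < a ∧ 0 < b ∧ 0 < c ∧ 0 < d ∧ a ≤ c ∧ b ≤ d ∧
    c * d = 1 + α ∧ (a * b = α ∨ a * b = 1)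

lemma amgm_aux (x y : ℝ) (hx : 0 < x) (hy : 0 < y) :
    2 * Real.sqrt (x * y) ≤ x + y := by
  nlinarith [sq_nonneg (Real.sqrt x - Real.sqrt y), Real.sq_sqrt hx.le,
    Real.sq_sqrt hy.le, Real.sqrt_mul hx.le y, Real.sqrt_nonneg x, Real.sqrt_nonneg y]

/-- **Lemma 3.2.** For `0 < α ≤ 1` the infimum of the double bubble perimeter
`a+b+2(c+d)` over all embedded-rectangle configurations equals `2√α + 4√(1+α)`,
attained at `(√α, √α, √(1+α), √(1+α))`. -/
theorem embedded_rectangle_min (α : ℝ) (h0 : 0 < α) (h1 : α ≤ 1) :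
    sInf {p : ℝ | ∃ a b c d : ℝ, IsEmbeddedConfig α a b c d ∧ p = a + b + 2 * (c + d)} =
        2 * Real.sqrt α + 4 * Real.sqrt (1 + α) ∧
      IsEmbeddedConfig α (Real.sqrt α) (Real.sqrt α) (Real.sqrt (1 + α))
        (Real.sqrt (1 + α)) ∧
      Real.sqrt α + Real.sqrt α + 2 * (Real.sqrt (1 + α) + Real.sqrt (1 + α)) =
        2 * Real.sqrt α + 4 * Real.sqrt (1 + α) := by
  have h1α : (0:ℝ) < 1 + α := by linarith
  have hsα : 0 < Real.sqrt α := Real.sqrt_pos.mpr h0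
  have hs1 : 0 < Real.sqrt (1 + α) := Real.sqrt_pos.mpr h1α
  have hle : Real.sqrt α ≤ Real.sqrt (1 + α) := Real.sqrt_le_sqrt (by linarith)
  have hmulα : Real.sqrt α * Real.sqrt α = α := Real.mul_self_sqrt h0.le
  have hmul1 : Real.sqrt (1 + α) * Real.sqrt (1 + α) = 1 + α := Real.mul_self_sqrt h1α.le
  have hconf : IsEmbeddedConfig α (Real.sqrt α) (Real.sqrt α) (Real.sqrt (1 + α))
      (Real.sqrt (1 + α)) :=
    ⟨hsα, hsα, hs1, hs1, hle, hle, hmul1, Or.inl hmulα⟩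
  refine ⟨?_, hconf, by ring⟩
  have hlb : ∀ p ∈ {p : ℝ | ∃ a b c d : ℝ, IsEmbeddedConfig α a b c d ∧
      p = a + b + 2 * (c + d)}, 2 * Real.sqrt α + 4 * Real.sqrt (1 + α) ≤ p := by
    rintro p ⟨a, b, c, d, ⟨ha, hb, hc, hd, _, _, hcd, hab⟩, rfl⟩
    have h2 : 2 * Real.sqrt (1 + α) ≤ c + d := by
      have := amgm_aux c d hc hd
      rwa [hcd] at this
    have h3 : 2 * Real.sqrt α ≤ a + b := by
      rcases hab with hab | hab
      · have := amgm_aux a b ha hb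
        rwa [hab] at this
      · have := amgm_aux a b ha hb
        rw [hab, Real.sqrt_one] at this
        have : Real.sqrt α ≤ 1 := by
          rw [show (1:ℝ) = Real.sqrt 1 by simp]
          exact Real.sqrt_le_sqrt h1
        nlinarith [amgm_aux a b ha hb, Real.sqrt_one]
    linarith
  apply le_antisymm
  · exact csInf_le ⟨_, hlb⟩ ⟨_, _, _, _, hconf, by ring⟩
  · exact le_csInf ⟨_, ⟨_, _, _, _, hconf, rfl⟩⟩ hlb
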